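/- In the ring R' = k[x_1,x_2,y_1,y_2,x_3]/(x_1 y_1 + x_2 y_2 - 1), the matrix F with rows (y_1, -x_2 y_1 (1-x_3), -1 + (1-x_3) x_1 y_1), (y_2, 1 - x_2 y_2 (1-x_3), (1-x_3) x_1 y_2), (0, -x_2, x_1) has determinant 1, its inverse is the matrix with rows (x_1, x_2, x_3), (-x_1 y_2, x_1 y_1, -y_2), (-x_2 y_2, x_2 y_1, y_1), and (x_1, x_2, x_3)·F = (1,0,0). -/
import Mathlib


open MvPolynomial

/-- `R' = k[x₁,x₂,y₁,y₂,x₃]/(x₁y₁ + x₂y₂ - 1)`, with `0 ↦ x₁, 1 ↦ x₂, 2 ↦ y₁, 3 ↦ y₂, 4 ↦ x₃`. -/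
abbrev VRing (k : Type*) [CommRing k] : Type _ :=
  MvPolynomial (Fin 5) k ⧸
    Ideal.span {(X 0 * X 2 + X 1 * X 3 - 1 : MvPolynomial (Fin 5) k)}

noncomputable def v {k : Type*} [CommRing k] (i : Fin 5) : VRing k :=
  Ideal.Quotient.mk _ (X i)

set_option linter.unreachableTactic false
set_option linter.unusedTactic false

lemma vrel {k : Type*} [CommRing k] : (v 0 : VRing k) * v 2 + v 1 * v 3 = 1 := by
  have h : (Ideal.Quotient.mk (Ideal.span {(X 0 * X 2 + X 1 * X 3 - 1 : MvPolynomial (Fin 5) k)}))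
      (X 0 * X 2 + X 1 * X 3 - 1) = 0 := by
    rw [Ideal.Quotient.eq_zero_iff_mem]
    exact Ideal.subset_span rfl
  rw [RingHom.map_sub, RingHom.map_add, RingHom.map_mul, RingHom.map_mul, RingHom.map_one,
    sub_eq_zero] at h
  exact h


/-- The elementary matrix `F`. -/
noncomputable def FMat (k : Type*) [CommRing k] : Matrix (Fin 3) (Fin 3) (VRing k) :=
  !![v 2, -(v 1) * v 2 * (1 - v 4), -1 + (1 - v 4) * v 0 * v 2;
     v 3, 1 - v 1 * v 3 * (1 - v 4), (1 - v 4) * v 0 * v 3;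
     0, -(v 1), v 0]

/-- The claimed inverse of `F`. -/
noncomputable def FMatInv (k : Type*) [CommRing k] : Matrix (Fin 3) (Fin 3) (VRing k) :=
  !![v 0, v 1, v 4;
     -(v 0) * v 3, v 0 * v 2, -(v 3);
     -(v 1) * v 3, v 1 * v 2, v 2]

set_option maxHeartbeats 1000000 in
theorem FMat_props (k : Type*) [CommRing k] :
    (FMat k).det = 1 ∧
    FMat k * FMatInv k = 1 ∧ FMatInv k * FMat k = 1 ∧
    Matrix.vecMul ![v 0, v 1, v 4] (FMat k) = ![1, 0, 0] := by
  have h := vrel (k := k)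
  refine ⟨?_, ?_, ?_, ?_⟩
  · simp only [FMat, Matrix.det_fin_three, Matrix.cons_val', Matrix.cons_val_zero,
      Matrix.cons_val_one, Matrix.head_cons, Matrix.empty_val', Matrix.cons_val_fin_one,
      Matrix.head_fin_const, Matrix.of_apply, Matrix.cons_val_two, Matrix.tail_cons]
    linear_combination h
  · rw [FMat, FMatInv, Matrix.mul_fin_three, Matrix.one_fin_three]
    ext i j
    fin_cases i <;> fin_cases j <;>
      simp [Matrix.vecHead, Matrix.vecTail] <;>
      first
        | ring1
        | linear_combination h
        | linear_combination (v 2 * (1 - v 4)) * h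
        | linear_combination (v 3 * (1 - v 4)) * h
        | linear_combination ((v 4 - 1) * v 1) * h
        | linear_combination ((1 - v 4) * v 0) * h
        | linear_combination ((v 4 - 1) * v 0) * h
  · rw [FMat, FMatInv, Matrix.mul_fin_three, Matrix.one_fin_three]
    ext i j
    fin_cases i <;> fin_cases j <;>
      simp [Matrix.vecHead, Matrix.vecTail] <;>
      first
        | ring1
        | linear_combination h
        | linear_combination (v 2 * (1 - v 4)) * h
        | linear_combination (v 3 * (1 - v 4)) * h
        | linear_combination ((v 4 - 1) * v 1) * h
        | linear_combination ((1 - v 4) * v 0) * h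
        | linear_combination ((v 4 - 1) * v 0) * h
  · funext j
    fin_cases j <;>
      simp [FMat, Matrix.vecMul, Matrix.vecHead, Matrix.vecTail, dotProduct,
        Fin.sum_univ_three] <;>
      first
        | ring1
        | linear_combination h
        | linear_combination ((v 4 - 1) * v 1) * h
        | linear_combination ((1 - v 4) * v 0) * h
        | linear_combination ((v 4 - 1) * v 0) * h
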